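/- Terminating form of Heine's q-Gauss theorem: Σ_{k=0}^{n} (-1)^k [n k]_q q^{binom(n-k,2)} (c/a;q)_k / (c;q)_k = q^{binom(n,2)} (a;q)_n (c/a)^n / (c;q)_n, for complex a ≠ 0, c, q with (c;q)_n ≠ 0 and q-binomial coefficients well-defined. -/

import Mathlib

/-!
Clearing the denominator `(c;q)_n` and writing `c = a b`, the claim becomes the polynomial identity
`S_n(b) := ∑_k (-1)^k [n k]_q q^(n-k choose 2) (b;q)_k (a b q^k;q)_(n-k) = q^(n choose 2) (a;q)_n b^n`
(a form of `q`-Chu–Vandermonde). The `q`-Pascal rule `[n+1, k+1] = q^(k+1) [n, k+1] + [n, k]`, together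
with `(b;q)_(k+1) = (1 - b) (bq;q)_k`, gives `S_(n+1)(b) = q^n (1 - a b q^n) S_n(b) - (1 - b) S_n(bq)`,
and induction on `n` for all `b` at once finishes the proof.
-/

noncomputable def qpoch (a q : ℂ) (n : ℕ) : ℂ := ∏ i ∈ Finset.range n, (1 - a * q ^ i)

noncomputable def qbinom (q : ℂ) (n k : ℕ) : ℂ :=
  qpoch q q n / (qpoch q q k * qpoch q q (n - k))

open Finset

lemma qpoch_zero (x q : ℂ) : qpoch x q 0 = 1 := prod_range_zero _

lemma qpoch_succ (x q : ℂ) (n : ℕ) : qpoch x q (n + 1) = qpoch x q n * (1 - x * q ^ n) :=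
  prod_range_succ _ _

lemma qpoch_add (x q : ℂ) (k m : ℕ) :
    qpoch x q (k + m) = qpoch x q k * qpoch (x * q ^ k) q m := by
  simp only [qpoch, prod_range_add, pow_add, mul_assoc]

lemma qpoch_succ' (x q : ℂ) (n : ℕ) : qpoch x q (n + 1) = (1 - x) * qpoch (x * q) q n := by
  rw [add_comm, qpoch_add, pow_one]
  simp [qpoch]

lemma qpoch_ne_zero {x q : ℂ} {n : ℕ} (h : ∀ i < n, 1 - x * q ^ i ≠ 0) : qpoch x q n ≠ 0 :=
  prod_ne_zero_iff.mpr fun i hi => h i (mem_range.mp hi)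

-- The Gaussian binomial by the `q`-Pascal rule: division-free, so its identities hold for every `q`.
noncomputable def qChoose (q : ℂ) : ℕ → ℕ → ℂ
  | _, 0 => 1
  | 0, _ + 1 => 0
  | n + 1, k + 1 => q ^ (k + 1) * qChoose q n (k + 1) + qChoose q n k

@[simp] lemma qChoose_zero_right (q : ℂ) (n : ℕ) : qChoose q n 0 = 1 := by cases n <;> rfl

lemma qChoose_succ_succ (q : ℂ) (n k : ℕ) :
    qChoose q (n + 1) (k + 1) = q ^ (k + 1) * qChoose q n (k + 1) + qChoose q n k := rfl

lemma qChoose_eq_zero_of_lt (q : ℂ) : ∀ {n k : ℕ}, n < k → qChoose q n k = 0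
  | 0, _ + 1, _ => rfl
  | _ + 1, _ + 1, h => by
    rw [qChoose_succ_succ, qChoose_eq_zero_of_lt q (by omega), qChoose_eq_zero_of_lt q (by omega),
      mul_zero, add_zero]

@[simp] lemma qChoose_self (q : ℂ) : ∀ n, qChoose q n n = 1
  | 0 => rfl
  | n + 1 => by
    rw [qChoose_succ_succ, qChoose_eq_zero_of_lt q n.lt_succ_self, qChoose_self q n, mul_zero,
      zero_add]

lemma qChoose_add_mul_qpoch_mul_qpoch (q : ℂ) :
    ∀ k m : ℕ, qChoose q (k + m) k * qpoch q q k * qpoch q q m = qpoch q q (k + m)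
  | 0, m => by simp [qpoch_zero]
  | k + 1, 0 => by simp [qpoch_zero]
  | k + 1, m + 1 => by
    have ih₁ := qChoose_add_mul_qpoch_mul_qpoch q (k + 1) m
    have ih₂ := qChoose_add_mul_qpoch_mul_qpoch q k (m + 1)
    rw [show k + (m + 1) = k + 1 + m by omega] at ih₂
    rw [show k + 1 + (m + 1) = k + 1 + m + 1 by omega, qChoose_succ_succ] at *
    simp only [qpoch_succ] at *
    linear_combination (q ^ (k + 1) * (1 - q * q ^ m)) * ih₁ + (1 - q * q ^ k) * ih₂

lemma qChoose_mul_qpoch_mul_qpoch (q : ℂ) {n k : ℕ} (hk : k ≤ n) :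
    qChoose q n k * qpoch q q k * qpoch q q (n - k) = qpoch q q n := by
  obtain ⟨m, rfl⟩ := Nat.exists_eq_add_of_le hk
  rw [Nat.add_sub_cancel_left, qChoose_add_mul_qpoch_mul_qpoch]

lemma qbinom_eq_qChoose {q : ℂ} {n k : ℕ} (hk : k ≤ n) (hk₀ : qpoch q q k ≠ 0)
    (hnk : qpoch q q (n - k) ≠ 0) : qbinom q n k = qChoose q n k := by
  rw [qbinom, div_eq_iff (mul_ne_zero hk₀ hnk), ← mul_assoc, qChoose_mul_qpoch_mul_qpoch q hk]

lemma sum_range_qChoose_succ_mul (q : ℂ) (n : ℕ) (f : ℕ → ℂ) :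
    ∑ k ∈ range (n + 2), qChoose q (n + 1) k * f k =
      ∑ k ∈ range (n + 1), qChoose q n k * (q ^ k * f k + f (k + 1)) := by
  have hlast : ∑ k ∈ range (n + 1), qChoose q n k * (q ^ k * f k) =
      ∑ k ∈ range (n + 2), qChoose q n k * (q ^ k * f k) := by
    rw [sum_range_succ _ (n + 1), qChoose_eq_zero_of_lt q n.lt_succ_self, zero_mul, add_zero]
  simp only [mul_add, sum_add_distrib, hlast]
  rw [sum_range_succ', sum_range_succ' _ (n + 1)]
  simp only [qChoose_succ_succ, add_mul, sum_add_distrib, qChoose_zero_right, pow_zero, one_mul]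
  rw [add_right_comm]
  congr 2
  exact sum_congr rfl fun k _ => by ring

theorem q_chu_vandermonde (q a : ℂ) (n : ℕ) (b : ℂ) :
    ∑ k ∈ range (n + 1), qChoose q n k *
        ((-1) ^ k * q ^ ((n - k) * (n - k - 1) / 2) * qpoch b q k * qpoch (a * b * q ^ k) q (n - k)) =
      q ^ (n * (n - 1) / 2) * qpoch a q n * b ^ n := by
  induction n generalizing b with
  | zero => simp [qpoch_zero]
  | succ n ih =>
    have hterm : ∀ k ∈ range (n + 1), qChoose q n k *
        (q ^ k * ((-1) ^ k * q ^ ((n + 1 - k) * (n + 1 - k - 1) / 2) * qpoch b q k *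
            qpoch (a * b * q ^ k) q (n + 1 - k)) +
          (-1) ^ (k + 1) * q ^ ((n + 1 - (k + 1)) * (n + 1 - (k + 1) - 1) / 2) *
            qpoch b q (k + 1) * qpoch (a * b * q ^ (k + 1)) q (n + 1 - (k + 1))) =
        q ^ n * (1 - a * b * q ^ n) * (qChoose q n k *
            ((-1) ^ k * q ^ ((n - k) * (n - k - 1) / 2) * qpoch b q k *
              qpoch (a * b * q ^ k) q (n - k))) -
          (1 - b) * (qChoose q n k * ((-1) ^ k * q ^ ((n - k) * (n - k - 1) / 2) *
            qpoch (b * q) q k * qpoch (a * (b * q) * q ^ k) q (n - k))) := by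
      intro k hk
      have hkn : k ≤ n := Nat.lt_succ_iff.mp (mem_range.mp hk)
      have hpow : q ^ n = q ^ k * q ^ (n - k) := by rw [← pow_add, Nat.add_sub_cancel' hkn]
      rw [Nat.add_sub_add_right, Nat.sub_add_comm hkn, Nat.triangle_succ, qpoch_succ,
        qpoch_succ' b, hpow, show a * b * q ^ (k + 1) = a * (b * q) * q ^ k by ring]
      ring
    rw [sum_range_qChoose_succ_mul, sum_congr rfl hterm, sum_sub_distrib, ← mul_sum, ← mul_sum,
      ih, ih, Nat.triangle_succ, qpoch_succ]
    ring

theorem terminating_q_gauss (q a c : ℂ) (ha : a ≠ 0) (n : ℕ)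
    (hc : ∀ i < n, 1 - c * q ^ i ≠ 0) (hpoch : ∀ k ≤ n, qpoch q q k ≠ 0) :
    ∑ k ∈ Finset.range (n + 1),
        (-1) ^ k * qbinom q n k * q ^ ((n - k) * (n - k - 1) / 2) *
          (qpoch (c / a) q k / qpoch c q k) =
      q ^ (n * (n - 1) / 2) * qpoch a q n * (c / a) ^ n / qpoch c q n := by
  rw [eq_div_iff (qpoch_ne_zero hc), sum_mul, ← q_chu_vandermonde, mul_div_cancel₀ c ha]
  refine sum_congr rfl fun k hk => ?_
  have hkn : k ≤ n := Nat.lt_succ_iff.mp (mem_range.mp hk)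
  have hck : qpoch c q k ≠ 0 := qpoch_ne_zero fun i hi => hc i (hi.trans_le hkn)
  have hsplit : qpoch c q n = qpoch c q k * qpoch (c * q ^ k) q (n - k) := by
    rw [← qpoch_add, Nat.add_sub_cancel' hkn]
  rw [qbinom_eq_qChoose hkn (hpoch k hkn) (hpoch _ (n.sub_le k)), hsplit]
  field_simp
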